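/- arXiv:1206.1906 — 2 statements merged into one kernel-verified Lean document; each statement's English description precedes it below -/
import Mathlib

section
/- Let G be a connected graph and H a graph. If (u1,v1) and (u2,v2) are distinct vertices of the lexicographic product G[H] with u1 not equivalent to u2 (i.e., u1 ≠ u2 and u1, u2 are not twins in G), then there exists a vertex u of G such that {(u,v) : v ∈ V(H)} ⊆ R_{G[H]}{(u1,v1),(u2,v2)}. -/
open Finset

variable {α β V : Type*}

/-- The corona product `G ⊙ H`. -/
def SimpleGraph.corona (G : SimpleGraph α) (H : SimpleGraph β) :
    SimpleGraph (α ⊕ α × β) where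
  Adj x y :=
    match x, y with
    | Sum.inl u1, Sum.inl u2 => G.Adj u1 u2
    | Sum.inl u1, Sum.inr p => u1 = p.1
    | Sum.inr p, Sum.inl u2 => p.1 = u2
    | Sum.inr p, Sum.inr q => p.1 = q.1 ∧ H.Adj p.2 q.2
  symm := by
    constructor
    rintro (u1 | p) (u2 | q) h
    · exact h.symm
    · exact h.symm
    · exact h.symm
    · exact ⟨h.1.symm, h.2.symm⟩
  loopless := by
    constructor
    rintro (u | p) h
    · exact G.irrefl h
    · exact H.irrefl h.2

/-- The lexicographic product `G[H]`. -/
def SimpleGraph.lexProd (G : SimpleGraph α) (H : SimpleGraph β) :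
    SimpleGraph (α × β) where
  Adj x y := G.Adj x.1 y.1 ∨ (x.1 = y.1 ∧ H.Adj x.2 y.2)
  symm := by
    constructor
    rintro x y (h | ⟨h1, h2⟩)
    · exact Or.inl h.symm
    · exact Or.inr ⟨h1.symm, h2.symm⟩
  loopless := by
    constructor
    rintro x (h | ⟨h1, h2⟩)
    · exact G.irrefl h
    · exact H.irrefl h2

open scoped Classical in
/-- `R_F{x,y}`: the set of vertices resolving `x` and `y` (distance measured by `edist`,
which is `∞` between vertices in different components). -/
noncomputable def resolvingFinset (F : SimpleGraph V) [Fintype V] (x y : V) : Finset V :=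
  univ.filter fun z => F.edist x z ≠ F.edist y z

/-- `S_H{v₁,v₂} = {v₁,v₂} ∪ (N_H(v₁) Δ N_H(v₂))`. -/
def locatingFinset (H : SimpleGraph V) [Fintype V] [DecidableEq V]
    [DecidableRel H.Adj] (v1 v2 : V) : Finset V :=
  {v1, v2} ∪ symmDiff (H.neighborFinset v1) (H.neighborFinset v2)

/-- A resolving function of `F`. -/
def IsResolvingFn (F : SimpleGraph V) [Fintype V] (g : V → ℝ) : Prop :=
  (∀ v, g v ∈ Set.Icc (0 : ℝ) 1) ∧
    ∀ x y : V, x ≠ y → 1 ≤ ∑ z ∈ resolvingFinset F x y, g z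

/-- The fractional metric dimension `dim_f(F)`. -/
noncomputable def fracMetricDim (F : SimpleGraph V) [Fintype V] : ℝ :=
  sInf {w | ∃ g, IsResolvingFn F g ∧ w = ∑ v, g v}

/-- A locating function of `H`. -/
def IsLocatingFn (H : SimpleGraph V) [Fintype V] [DecidableEq V]
    [DecidableRel H.Adj] (g : V → ℝ) : Prop :=
  (∀ v, g v ∈ Set.Icc (0 : ℝ) 1) ∧
    ∀ v1 v2 : V, v1 ≠ v2 → 1 ≤ ∑ v ∈ locatingFinset H v1 v2, g v

/-- `l_f(H)`: the minimum weight of a locating function. -/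
noncomputable def fracLoc (H : SimpleGraph V) [Fintype V] [DecidableEq V]
    [DecidableRel H.Adj] : ℝ :=
  sInf {w | ∃ g, IsLocatingFn H g ∧ w = ∑ v, g v}

open scoped Classical in
/-- `λ(H)`: maximum number of common neighbours of two adjacent vertices, `-1` if no edges. -/
noncomputable def lambdaMax (H : SimpleGraph V) [Fintype V] : ℤ :=
  if hne : (univ.filter fun p : V × V => H.Adj p.1 p.2).Nonempty then
    (univ.filter fun p : V × V => H.Adj p.1 p.2).sup' hne fun p =>
      ((univ.filter fun w => H.Adj p.1 w ∧ H.Adj p.2 w).card : ℤ)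
  else -1

open scoped Classical in
/-- `μ(H)`: maximum number of common neighbours of two distinct nonadjacent vertices,
`0` for complete graphs. -/
noncomputable def muMax (H : SimpleGraph V) [Fintype V] : ℤ :=
  if hne : (univ.filter fun p : V × V => p.1 ≠ p.2 ∧ ¬H.Adj p.1 p.2).Nonempty then
    (univ.filter fun p : V × V => p.1 ≠ p.2 ∧ ¬H.Adj p.1 p.2).sup' hne fun p =>
      ((univ.filter fun w => H.Adj p.1 w ∧ H.Adj p.2 w).card : ℤ)
  else 0

/-- A graph is vertex-transitive if its automorphism group is transitive on vertices. -/
def IsVertexTransitive (H : SimpleGraph V) : Prop :=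
  ∀ u v : V, ∃ φ : H ≃g H, φ u = v

/-- Two distinct vertices are twins if they have the same closed or the same open
neighbourhood. -/
def SimpleGraph.Twins (G : SimpleGraph V) (u1 u2 : V) : Prop :=
  u1 ≠ u2 ∧ (insert u1 (G.neighborSet u1) = insert u2 (G.neighborSet u2) ∨
    G.neighborSet u1 = G.neighborSet u2)

open scoped Classical in
/-- `m₁(G)`: number of vertices in twin-equivalence classes of type 1 (singletons). -/
noncomputable def m1 (G : SimpleGraph V) [Fintype V] : ℕ :=
  (univ.filter fun u => ∀ w, ¬G.Twins u w).card

open scoped Classical in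
/-- `m₂(G)`: number of vertices in twin-equivalence classes of type 2 (cliques). -/
noncomputable def m2 (G : SimpleGraph V) [Fintype V] : ℕ :=
  (univ.filter fun u => ∃ w, G.Twins u w ∧ G.Adj u w).card

open scoped Classical in
/-- `m₃(G)`: number of vertices in twin-equivalence classes of type 3 (independent sets). -/
noncomputable def m3 (G : SimpleGraph V) [Fintype V] : ℕ :=
  (univ.filter fun u => ∃ w, G.Twins u w ∧ ¬G.Adj u w).card

/-! If `u₁, u₂` are not twins, some `w ∉ {u₁, u₂}` is a neighbour of exactly one of them
(it comes from the open neighbourhoods when `u₁, u₂` are nonadjacent and from the closed ones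
when they are adjacent). In `G[H]` every vertex of the fibre over `w` is then at distance `1`
from one of `(u₁,v₁), (u₂,v₂)` and at distance at least `2` from the other. -/

namespace SimpleGraph

theorem exists_adj_not_adj_of_not_twins {G : SimpleGraph V} {u1 u2 : V} (hne : u1 ≠ u2)
    (h : ¬G.Twins u1 u2) :
    ∃ w, (G.Adj u1 w ∧ ¬G.Adj u2 w ∧ w ≠ u2) ∨ (G.Adj u2 w ∧ ¬G.Adj u1 w ∧ w ≠ u1) := by
  simp only [Twins, ne_eq, hne, not_false_eq_true, true_and, not_or] at h
  obtain ⟨hclosed, hopen⟩ := h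
  by_cases hadj : G.Adj u1 u2
  · obtain ⟨w, hw⟩ := Set.symmDiff_nonempty.2 hclosed
    simp only [Set.mem_symmDiff, Set.mem_insert_iff, mem_neighborSet, not_or] at hw
    refine ⟨w, ?_⟩
    rcases hw with ⟨rfl | hw1, hw2, hw2'⟩ | ⟨rfl | hw2, hw1, hw1'⟩
    · exact absurd hadj.symm hw2'
    · exact Or.inl ⟨hw1, hw2', hw2⟩
    · exact absurd hadj hw1'
    · exact Or.inr ⟨hw2, hw1', hw1⟩
  · obtain ⟨w, hw⟩ := Set.symmDiff_nonempty.2 hopen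
    simp only [Set.mem_symmDiff, mem_neighborSet] at hw
    refine ⟨w, ?_⟩
    rcases hw with ⟨hw1, hw2⟩ | ⟨hw2, hw1⟩
    · exact Or.inl ⟨hw1, hw2, by rintro rfl; exact hadj hw1⟩
    · exact Or.inr ⟨hw2, hw1, by rintro rfl; exact hadj hw2.symm⟩

theorem lexProd_adj {G : SimpleGraph α} {H : SimpleGraph β} {x y : α × β} :
    (G.lexProd H).Adj x y ↔ G.Adj x.1 y.1 ∨ (x.1 = y.1 ∧ H.Adj x.2 y.2) :=
  Iff.rfl

theorem lexProd_edist_ne_of_adj_of_not_adj {G : SimpleGraph α} (H : SimpleGraph β) {a b w : α}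
    (ha : G.Adj a w) (hb : ¬G.Adj b w) (hwb : w ≠ b) (va vb v : β) :
    (G.lexProd H).edist (a, va) (w, v) ≠ (G.lexProd H).edist (b, vb) (w, v) := by
  rw [edist_eq_one_iff_adj.2 (lexProd_adj.2 (Or.inl ha)), ne_comm, Ne, edist_eq_one_iff_adj,
    lexProd_adj]
  rintro (hbw | ⟨rfl, -⟩)
  exacts [hb hbw, hwb rfl]

end SimpleGraph

theorem mem_resolvingFinset [Fintype V] {F : SimpleGraph V} {x y z : V} :
    z ∈ resolvingFinset F x y ↔ F.edist x z ≠ F.edist y z := by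
  simp only [resolvingFinset, mem_filter, mem_univ, true_and]

theorem stmt_12_general {α β : Type*} [Fintype α] [Fintype β]
    (G : SimpleGraph α) (H : SimpleGraph β)
    (u1 u2 : α) (v1 v2 : β) (h1 : u1 ≠ u2) (h2 : ¬G.Twins u1 u2) :
    ∃ u : α, ∀ v : β,
      (u, v) ∈ resolvingFinset (G.lexProd H) (u1, v1) (u2, v2) := by
  obtain ⟨w, ⟨ha, hb, hwb⟩ | ⟨ha, hb, hwb⟩⟩ := G.exists_adj_not_adj_of_not_twins h1 h2
  · exact ⟨w, fun v => mem_resolvingFinset.2 <|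
      G.lexProd_edist_ne_of_adj_of_not_adj H ha hb hwb v1 v2 v⟩
  · exact ⟨w, fun v => mem_resolvingFinset.2 <|
      (G.lexProd_edist_ne_of_adj_of_not_adj H ha hb hwb v2 v1 v).symm⟩

/-- If `(u₁,v₁)` and `(u₂,v₂)` are vertices of `G[H]` with `u₁ ≠ u₂`
not twins in `G`, then some fibre `{u} × V(H)` is entirely contained in
`R_{G[H]}{(u₁,v₁),(u₂,v₂)}`. -/
theorem stmt_12 {α β : Type*} [Fintype α] [Fintype β]
    (G : SimpleGraph α) (H : SimpleGraph β)
    (hG : G.Connected) (hca : 2 ≤ Fintype.card α) (hcb : 2 ≤ Fintype.card β)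
    (u1 u2 : α) (v1 v2 : β) (h1 : u1 ≠ u2) (h2 : ¬G.Twins u1 u2) :
    ∃ u : α, ∀ v : β,
      (u, v) ∈ resolvingFinset (G.lexProd H) (u1, v1) (u2, v2) :=
  stmt_12_general G H u1 u2 v1 v2 h1 h2
end

section
/- Let G be a connected graph and H a graph. If f̄ is a resolving function of the lexicographic product G[H], then for every vertex u of G the function f̄_u : V(H) → [0,1] defined by f̄_u(v) = f̄((u,v)) is a locating function of H. Consequently, dim_f(G[H]) ≥ |V(G)| · l_f(H). -/
open Finset

variable {α β V : Type*}

/-! Within a fibre `{u} × V(H)` of `G[H]`, two vertices are at distance `1` if adjacent in `H` and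
`2` otherwise (through any `G`-neighbour of `u`), while every vertex outside the fibre is
equidistant from all of it. Hence a vertex of `G[H]` resolving `(u, v₁)` and `(u, v₂)` is some
`(u, x)` with `x ∈ S_H{v₁, v₂}`, so the restriction of a resolving function to a fibre is locating;
summing over the `|V(G)|` fibres gives the bound. -/

namespace SimpleGraph

variable {G : SimpleGraph α} {H : SimpleGraph β}

theorem exists_walk_fst_length_le_of_lexProd {x y : α × β} (p : (G.lexProd H).Walk x y) :
    ∃ q : G.Walk x.1 y.1, q.length ≤ p.length := by
  induction p with
  | nil => exact ⟨.nil, le_rfl⟩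
  | cons h p ih =>
    obtain ⟨q, hq⟩ := ih
    rw [Walk.length_cons]
    rcases h with hG | ⟨heq, -⟩
    · exact ⟨.cons hG q, by simpa using hq⟩
    · exact ⟨q.copy heq.symm rfl, by rw [Walk.length_copy]; omega⟩

theorem edist_fst_le_edist_lexProd (x y : α × β) :
    G.edist x.1 y.1 ≤ (G.lexProd H).edist x y := by
  by_cases htop : (G.lexProd H).edist x y = ⊤
  · simp [htop]
  obtain ⟨p, hp⟩ := exists_walk_of_edist_ne_top htop
  obtain ⟨q, hq⟩ := exists_walk_fst_length_le_of_lexProd p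
  calc G.edist x.1 y.1 ≤ q.length := q.edist_le
    _ ≤ p.length := by exact_mod_cast hq
    _ = (G.lexProd H).edist x y := hp

def lexProdSectL (G : SimpleGraph α) (H : SimpleGraph β) (x : β) : G →g G.lexProd H :=
  ⟨fun a => (a, x), Or.inl⟩

theorem edist_lexProd_le_of_fst_ne {u w : α} (huw : u ≠ w) (v x : β) :
    (G.lexProd H).edist (u, v) (w, x) ≤ G.edist u w := by
  by_cases htop : G.edist u w = ⊤
  · simp [htop]
  obtain ⟨p, hp⟩ := exists_walk_of_edist_ne_top htop
  cases p with
  | nil => exact absurd rfl huw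
  | @cons _ c _ h q =>
    -- the first step of `p` also moves from `v` to `x`; the rest runs in the copy of `G` at `x`
    have hstep : (G.lexProd H).Adj (u, v) (lexProdSectL G H x c) := Or.inl h
    calc (G.lexProd H).edist (u, v) (w, x)
        ≤ (Walk.cons hstep (q.map (lexProdSectL G H x))).length := Walk.edist_le _
      _ = G.edist u w := by rw [← hp, Walk.length_cons, Walk.length_cons, Walk.length_map]

theorem edist_lexProd_of_fst_ne {u w : α} (huw : u ≠ w) (v x : β) :
    (G.lexProd H).edist (u, v) (w, x) = G.edist u w :=
  (edist_lexProd_le_of_fst_ne huw v x).antisymm (edist_fst_le_edist_lexProd (u, v) (w, x))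

theorem edist_lexProd_of_snd_ne [DecidableRel H.Adj] {u u' : α} (hu : G.Adj u u') {v x : β}
    (hvx : v ≠ x) :
    (G.lexProd H).edist (u, v) (u, x) = if H.Adj v x then 1 else 2 := by
  split_ifs with hvx'
  · exact edist_eq_one_iff_adj.mpr (Or.inr ⟨rfl, hvx'⟩)
  · refine edist_eq_two_iff.mpr ⟨by simpa using hvx, ?_, ⟨(u', v), Or.inl hu, Or.inl hu⟩⟩
    rintro (h | ⟨-, h⟩)
    exacts [G.irrefl h, hvx' h]

end SimpleGraph

open SimpleGraph

theorem mem_locatingFinset [Fintype V] [DecidableEq V] {H : SimpleGraph V} [DecidableRel H.Adj]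
    {v1 v2 x : V} :
    x ∈ locatingFinset H v1 v2 ↔ x = v1 ∨ x = v2 ∨ ¬(H.Adj v1 x ↔ H.Adj v2 x) := by
  simp only [locatingFinset, mem_union, mem_insert, mem_singleton, mem_symmDiff,
    mem_neighborFinset]
  tauto

theorem isResolvingFn_one [Fintype V] (F : SimpleGraph V) : IsResolvingFn F 1 := by
  refine ⟨fun _ => by simp, fun x y hxy => ?_⟩
  have hx : x ∈ resolvingFinset F x y := by
    simp only [resolvingFinset, mem_filter, mem_univ, true_and, edist_self]
    exact (edist_pos_of_ne hxy.symm).ne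
  simpa using Finset.one_le_card.mpr ⟨x, hx⟩

theorem le_fracMetricDim [Fintype V] {F : SimpleGraph V} {c : ℝ}
    (h : ∀ g, IsResolvingFn F g → c ≤ ∑ v, g v) : c ≤ fracMetricDim F :=
  le_csInf ⟨_, 1, isResolvingFn_one F, rfl⟩ (by rintro _ ⟨g, hg, rfl⟩; exact h g hg)

theorem fracLoc_le_sum [Fintype V] [DecidableEq V] {H : SimpleGraph V} [DecidableRel H.Adj]
    {g : V → ℝ} (hg : IsLocatingFn H g) : fracLoc H ≤ ∑ v, g v :=
  csInf_le ⟨0, by rintro _ ⟨g, hg, rfl⟩; exact sum_nonneg fun v _ => (hg.1 v).1⟩ ⟨g, hg, rfl⟩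

section Fibre

variable [Fintype α] [Fintype β] [DecidableEq β] {G : SimpleGraph α} {H : SimpleGraph β}
  [DecidableRel H.Adj]

theorem resolvingFinset_lexProd_subset (hG : ∀ u, ∃ u', G.Adj u u') (u : α) (v1 v2 : β) :
    resolvingFinset (G.lexProd H) (u, v1) (u, v2) ⊆
      (locatingFinset H v1 v2).map (Function.Embedding.sectR u β) := by
  rintro ⟨w, x⟩ hz
  have hdist : (G.lexProd H).edist (u, v1) (w, x) ≠ (G.lexProd H).edist (u, v2) (w, x) := by
    simpa [resolvingFinset] using hz
  obtain rfl : w = u := by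
    by_contra hwu
    exact hdist (by
      rw [edist_lexProd_of_fst_ne (Ne.symm hwu), edist_lexProd_of_fst_ne (Ne.symm hwu)])
  refine mem_map.mpr ⟨x, ?_, rfl⟩
  by_contra hx
  obtain ⟨hx1, hx2, hadj⟩ : x ≠ v1 ∧ x ≠ v2 ∧ (H.Adj v1 x ↔ H.Adj v2 x) := by
    simpa [mem_locatingFinset] using hx
  obtain ⟨u', hu'⟩ := hG w
  exact hdist (by rw [edist_lexProd_of_snd_ne hu' (Ne.symm hx1),
    edist_lexProd_of_snd_ne hu' (Ne.symm hx2), if_congr hadj rfl rfl])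

theorem IsResolvingFn.isLocatingFn_lexProd_fiber (hG : ∀ u, ∃ u', G.Adj u u')
    {f : α × β → ℝ} (hf : IsResolvingFn (G.lexProd H) f) (u : α) :
    IsLocatingFn H fun v => f (u, v) := by
  refine ⟨fun v => hf.1 (u, v), fun v1 v2 hne => ?_⟩
  calc (1 : ℝ) ≤ ∑ z ∈ resolvingFinset (G.lexProd H) (u, v1) (u, v2), f z :=
        hf.2 _ _ (by simpa using hne)
    _ ≤ ∑ z ∈ (locatingFinset H v1 v2).map (Function.Embedding.sectR u β), f z :=
        sum_le_sum_of_subset_of_nonneg (resolvingFinset_lexProd_subset hG u v1 v2)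
          fun z _ _ => (hf.1 z).1
    _ = ∑ v ∈ locatingFinset H v1 v2, f (u, v) := sum_map _ _ _

theorem card_mul_fracLoc_le_fracMetricDim_lexProd (hG : ∀ u, ∃ u', G.Adj u u') :
    (Fintype.card α : ℝ) * fracLoc H ≤ fracMetricDim (G.lexProd H) := by
  refine le_fracMetricDim fun f hf => ?_
  calc (Fintype.card α : ℝ) * fracLoc H = ∑ _u : α, fracLoc H := by simp
    _ ≤ ∑ u : α, ∑ v, f (u, v) :=
        sum_le_sum fun u _ => fracLoc_le_sum (hf.isLocatingFn_lexProd_fiber hG u)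
    _ = ∑ p : α × β, f p := (Fintype.sum_prod_type f).symm

end Fibre

theorem stmt_14_general {α β : Type*} [Fintype α] [Fintype β] [DecidableEq β]
    (G : SimpleGraph α) (H : SimpleGraph β) [DecidableRel H.Adj]
    (hG : G.Connected) (hca : 2 ≤ Fintype.card α) :
    (∀ f : α × β → ℝ, IsResolvingFn (G.lexProd H) f →
      ∀ u : α, IsLocatingFn H fun v => f (u, v)) ∧
    (Fintype.card α : ℝ) * fracLoc H ≤ fracMetricDim (G.lexProd H) := by
  have : Nontrivial α := Fintype.one_lt_card_iff_nontrivial.mp hca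
  have hnbr : ∀ u, ∃ u', G.Adj u u' := hG.preconnected.exists_adj_of_nontrivial
  exact ⟨fun f hf => hf.isLocatingFn_lexProd_fiber hnbr,
    card_mul_fracLoc_le_fracMetricDim_lexProd hnbr⟩

/-- If `f` is a resolving function of `G[H]`, then each fibre
restriction `v ↦ f (u, v)` is a locating function of `H`; consequently
`dim_f(G[H]) ≥ |V(G)| · l_f(H)`. -/
theorem stmt_14 {α β : Type*} [Fintype α] [Fintype β] [DecidableEq β]
    (G : SimpleGraph α) (H : SimpleGraph β) [DecidableRel H.Adj]
    (hG : G.Connected) (hca : 2 ≤ Fintype.card α) (hcb : 2 ≤ Fintype.card β) :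
    (∀ f : α × β → ℝ, IsResolvingFn (G.lexProd H) f →
      ∀ u : α, IsLocatingFn H fun v => f (u, v)) ∧
    (Fintype.card α : ℝ) * fracLoc H ≤ fracMetricDim (G.lexProd H) :=
  stmt_14_general G H hG hca
end
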